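/- arXiv:1511.08037 — 2 statements merged into one kernel-verified Lean document; each statement's English description precedes it below -/
import Mathlib

section
/- Let V be a 3-dimensional real vector space with a Lorentzian inner product g of signature (2,1), let φ be an endomorphism of V, ξ a vector and η a linear form with φ² = -id + η⊗ξ, η(ξ)=1, and g(φX,φY) = -g(X,Y)+η(X)η(Y) for all X,Y. If v ∈ V is a nonzero null vector (g(v,v)=0), then the triple {v, ξ, φv} is linearly independent, hence a basis of V. -/
/-- On a 3-dimensional real vector space with a Lorentzian metric `g` of
signature (2,1) and an almost contact B-metric structure `(φ, ξ, η, g)`, for any nonzero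
null vector `v` the triple `{v, ξ, φ v}` is linearly independent (hence a basis). -/
theorem slant_null_basis
    {V : Type*} [AddCommGroup V] [Module ℝ V] [FiniteDimensional ℝ V]
    (hdim : Module.finrank ℝ V = 3)
    (g : LinearMap.BilinForm ℝ V) (hsym : ∀ X Y : V, g X Y = g Y X)
    (φ : V →ₗ[ℝ] V) (ξ : V) (η : V →ₗ[ℝ] ℝ)
    (hφ2 : ∀ X : V, φ (φ X) = -X + η X • ξ)
    (hηξ : η ξ = 1)
    (hgφ : ∀ X Y : V, g (φ X) (φ Y) = -(g X Y) + η X * η Y)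
    (hηg : ∀ X : V, η X = g X ξ)
    (v : V) (hv : v ≠ 0) (hnull : g v v = 0) :
    LinearIndependent ℝ ![v, ξ, φ v] := by
  have hgξξ : g ξ ξ = 1 := by rw [← hηg, hηξ]
  -- φ (φ ξ) = 0
  have hφ2ξ : φ (φ ξ) = 0 := by rw [hφ2, hηξ, one_smul, neg_add_cancel]
  -- φ ξ = η (φ ξ) • ξ
  have hφξ' : φ ξ = η (φ ξ) • ξ := by
    have h := hφ2 (φ ξ)
    rw [hφ2ξ, map_zero] at h
    linear_combination (norm := module) h
  -- g (φ ξ) (φ ξ) = 0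
  have hgφξ : g (φ ξ) (φ ξ) = 0 := by
    rw [hgφ, hgξξ, hηξ]; ring
  have hηφξ : η (φ ξ) = 0 := by
    rw [hφξ'] at hgφξ
    simp only [map_smul, smul_eq_mul, LinearMap.smul_apply, hgξξ] at hgφξ
    nlinarith [hgφξ]
  have hφξ : φ ξ = 0 := by rw [hφξ', hηφξ, zero_smul]
  rw [Fintype.linearIndependent_iff]
  intro c hc
  set a := c 0 with ha
  set b := c 1 with hb
  set d := c 2 with hd
  have h1 : a • v + b • ξ + d • φ v = 0 := by
    have := hc
    simpa [Fin.sum_univ_three] using this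
  -- apply φ
  have h2 : a • φ v + d • (-v + η v • ξ) = 0 := by
    have := congrArg φ h1
    simpa [map_add, map_smul, hφξ, hφ2] using this
  -- eliminate φ v
  have key : (a ^ 2 + d ^ 2) • v = (d ^ 2 * η v - a * b) • ξ := by
    linear_combination (norm := module) a • h1 - d • h2
  by_cases hs : a ^ 2 + d ^ 2 = 0
  · have ha0 : a = 0 := by nlinarith [sq_nonneg a, sq_nonneg d]
    have hd0 : d = 0 := by nlinarith [sq_nonneg a, sq_nonneg d]
    have hb0 : b = 0 := by
      have h3 : b • ξ = 0 := by
        rw [ha0, hd0] at h1; simpa using h1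
      have := congrArg η h3
      simpa [hηξ] using this
    intro i
    fin_cases i
    exacts [ha0, hb0, hd0]
  · exfalso
    set μ := d ^ 2 * η v - a * b with hμ
    have hveq : v = ((a ^ 2 + d ^ 2)⁻¹ * μ) • ξ := by
      rw [mul_smul, ← key, ← mul_smul, inv_mul_cancel₀ hs, one_smul]
    have : g v v = ((a ^ 2 + d ^ 2)⁻¹ * μ) ^ 2 := by
      rw [hveq]
      simp only [map_smul, LinearMap.smul_apply, smul_eq_mul, hgξξ]
      ring
    have hμ0 : (a ^ 2 + d ^ 2)⁻¹ * μ = 0 := by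
      have := this.symm.trans hnull
      nlinarith [this]
    rw [hμ0, zero_smul] at hveq
    exact hv hveq
end

section
/- Suppose on a 3-dimensional F₁-manifold the Frenet equations ∇_Ċ Ċ = W₁, ∇_Ċ N₁ = τW₁, ∇_Ċ W₁ = -τĊ - N₁ hold along a slant null curve with ∇ξ = 0, η(Ċ) = a ≠ 0, and N₁ = (1/a)ξ - (1/(2a²))Ċ. Then ∇_Ċ N₁ = -(1/(2a²))W₁, and hence the torsion is τ = -1/(2a²). -/
/-- If along a slant null curve the Frenet equations hold with a parallel
Reeb vector field (`∇_Cdot ξ = 0`, `∇_Cdot Cdot = W₁`), and `N₁ = (1/a)•ξ - (1/(2a²))•Cdot`, then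
`∇_Cdot N₁ = -(1/(2a²))•W₁` and the torsion is `τ = -1/(2a²)`. -/
theorem torsion_value
    {V : Type*} [AddCommGroup V] [Module ℝ V]
    (g : LinearMap.BilinForm ℝ V)
    (D : V →ₗ[ℝ] V)  -- covariant differentiation ∇_Cdot along the curve
    (Cdot ξ W₁ N₁ : V) (a τ : ℝ) (ha : a ≠ 0)
    (hξ : D ξ = 0)                 -- ∇ξ = 0
    (hCC : D Cdot = W₁)               -- first Cartan Frenet equation
    (hN₁ : N₁ = (1 / a) • ξ - (1 / (2 * a ^ 2)) • Cdot)
    (hDN : D N₁ = τ • W₁)          -- second Cartan Frenet equation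
    (hWW : g W₁ W₁ = 1) :
    D N₁ = (-(1 / (2 * a ^ 2))) • W₁ ∧ τ = -(1 / (2 * a ^ 2)) := by
  have key : D N₁ = (-(1 / (2 * a ^ 2))) • W₁ := by
    rw [hN₁, map_sub, map_smul, map_smul, hξ, hCC, smul_zero, zero_sub, neg_smul]
  refine ⟨key, ?_⟩
  have h := congrArg (fun v => g v W₁) (hDN ▸ key)
  simpa [map_smul, hWW] using h
end
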